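/- Deterministic Dantzig-selector error bound: consider the linear model y_i = z_i'β + ε_i with fixed design, and let β̂ minimize ‖b‖_{ℓ₁} subject to √n max_{1≤j≤p} |E_n[z_{ij}(y_i − z_i'b)]| ≤ λ. On the event {√n max_{1≤j≤p} |E_n[z_{ij} ε_i]| ≤ λ}, the error δ̂ = β̂ − β satisfies δ̂ ∈ R(β) := {δ : ‖β+δ‖_{ℓ₁} ≤ ‖β‖_{ℓ₁}}, √n max_{1≤j≤p} |E_n[z_{ij}(z_i' δ̂)]| ≤ 2λ, and consequently ‖δ̂‖_I ≤ 2λ/(√n κ_I(β)) for any seminorm ‖·‖_I with identifiability factor κ_I(β) = inf{ max_j |E_n[z_{ij}(z_i'δ)]|/‖δ‖_I : δ ∈ R(β), ‖δ‖_I ≠ 0 }. -/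

import Mathlib

/-!
On the event, the true `β` satisfies the Dantzig constraint, so `‖β̂‖₁ ≤ ‖β‖₁` by minimality,
i.e. `δ̂ ∈ R(β)`. Since `Zδ̂ = ε - (y - Zβ̂)`, the triangle inequality for
`v ↦ max_j |E_n[z_{ij} v_i]|` bounds `√n max_j |E_n[z_{ij}(z_i'δ̂)]|` by the two constraint
levels, `λ + λ`. The last bound is then the definition of `κ_I(β)` as an infimum, evaluated at `δ̂`.
-/

noncomputable def l1Norm {p : ℕ} (b : Fin p → ℝ) : ℝ := ∑ j, |b j|

/-- The maximal empirical correlation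
`√n max_j |E_n[z_{ij}(y_i − z_i'b)]|` appearing in the Dantzig constraint. -/
noncomputable def dantzigScore (n p : ℕ) (hp : 0 < p) (z : Fin n → Fin p → ℝ)
    (y : Fin n → ℝ) (b : Fin p → ℝ) : ℝ :=
  Real.sqrt n * Finset.univ.sup' ⟨⟨0, hp⟩, Finset.mem_univ _⟩ fun j =>
    |(n : ℝ)⁻¹ * ∑ i, z i j * (y i - ∑ k, z i k * b k)|

open Matrix

/-- `max_j |E_n[z_{ij} v_i]|`, with the design `z` read as an `n × p` matrix. -/
noncomputable def maxCorr {n p : ℕ} (hp : 0 < p) (z : Matrix (Fin n) (Fin p) ℝ)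
    (v : Fin n → ℝ) : ℝ :=
  Finset.univ.sup' ⟨⟨0, hp⟩, Finset.mem_univ _⟩ fun j => |(n : ℝ)⁻¹ * (zᵀ *ᵥ v) j|

section maxCorr

variable {n p : ℕ} (hp : 0 < p) (z : Matrix (Fin n) (Fin p) ℝ)

theorem maxCorr_nonneg (v : Fin n → ℝ) : 0 ≤ maxCorr hp z v :=
  (abs_nonneg _).trans (Finset.le_sup' (fun j => |(n : ℝ)⁻¹ * (zᵀ *ᵥ v) j|)
    (Finset.mem_univ ⟨0, hp⟩))

theorem maxCorr_sub_le (v w : Fin n → ℝ) :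
    maxCorr hp z (v - w) ≤ maxCorr hp z v + maxCorr hp z w := by
  refine Finset.sup'_le _ _ fun j _ => ?_
  rw [mulVec_sub, Pi.sub_apply, mul_sub]
  exact (abs_sub _ _).trans (add_le_add
    (Finset.le_sup' (fun j => |(n : ℝ)⁻¹ * (zᵀ *ᵥ v) j|) (Finset.mem_univ j))
    (Finset.le_sup' (fun j => |(n : ℝ)⁻¹ * (zᵀ *ᵥ w) j|) (Finset.mem_univ j)))

theorem dantzigScore_eq_maxCorr (y : Fin n → ℝ) (b : Fin p → ℝ) :
    dantzigScore n p hp z y b = Real.sqrt n * maxCorr hp z (y - z *ᵥ b) :=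
  rfl

variable {y ε : Fin n → ℝ} {β : Fin p → ℝ}

theorem dantzigScore_eq_of_model (hy : y = z *ᵥ β + ε) :
    dantzigScore n p hp z y β = Real.sqrt n * maxCorr hp z ε := by
  rw [dantzigScore_eq_maxCorr, hy, add_sub_cancel_left]

theorem maxCorr_mulVec_error_le (hy : y = z *ᵥ β + ε) (b : Fin p → ℝ) :
    maxCorr hp z (z *ᵥ (b - β)) ≤ maxCorr hp z ε + maxCorr hp z (y - z *ᵥ b) := by
  have hdecomp : z *ᵥ (b - β) = ε - (y - z *ᵥ b) := by
    rw [hy, mulVec_sub]; abel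
  rw [hdecomp]
  exact maxCorr_sub_le hp z _ _

end maxCorr

theorem sInf_div_seminorm_mul_le {E : Type*} [AddCommGroup E] [Module ℝ E]
    (I : Seminorm ℝ E) (R : Set E) (g : E → ℝ) (hg : ∀ δ, 0 ≤ g δ) {δ₀ : E} (h₀ : δ₀ ∈ R) :
    sInf {r : ℝ | ∃ δ, δ ∈ R ∧ I δ ≠ 0 ∧ r = g δ / I δ} * I δ₀ ≤ g δ₀ := by
  by_cases hI : I δ₀ = 0
  · rw [hI, mul_zero]; exact hg δ₀
  have hbdd : BddBelow {r : ℝ | ∃ δ, δ ∈ R ∧ I δ ≠ 0 ∧ r = g δ / I δ} := by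
    refine ⟨0, ?_⟩
    rintro _ ⟨δ, -, -, rfl⟩
    exact div_nonneg (hg δ) (apply_nonneg I δ)
  calc _ ≤ g δ₀ / I δ₀ * I δ₀ :=
        mul_le_mul_of_nonneg_right (csInf_le hbdd ⟨δ₀, h₀, hI, rfl⟩) (apply_nonneg I δ₀)
    _ = g δ₀ := div_mul_cancel₀ _ hI

theorem dantzig_selector_deterministic_bound_general (n p : ℕ) (hn : 0 < n) (hp : 0 < p)
    (z : Fin n → Fin p → ℝ) (β : Fin p → ℝ) (ε : Fin n → ℝ)
    (y : Fin n → ℝ) (hy : ∀ i, y i = (∑ j, z i j * β j) + ε i)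
    (lam : ℝ)
    (βhat : Fin p → ℝ)
    (hfeas : dantzigScore n p hp z y βhat ≤ lam)
    (hmin : ∀ b : Fin p → ℝ, dantzigScore n p hp z y b ≤ lam →
      l1Norm βhat ≤ l1Norm b)
    (hevent : Real.sqrt n * (Finset.univ.sup' ⟨⟨0, hp⟩, Finset.mem_univ _⟩ fun j =>
      |(n : ℝ)⁻¹ * ∑ i, z i j * ε i|) ≤ lam)
    (I : Seminorm ℝ (Fin p → ℝ)) :
    l1Norm (β + (βhat - β)) ≤ l1Norm β ∧
    Real.sqrt n * (Finset.univ.sup' ⟨⟨0, hp⟩, Finset.mem_univ _⟩ fun j =>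
        |(n : ℝ)⁻¹ * ∑ i, z i j * (∑ k, z i k * (βhat k - β k))|) ≤ 2 * lam ∧
    sInf {r : ℝ | ∃ δ : Fin p → ℝ, l1Norm (β + δ) ≤ l1Norm β ∧ I δ ≠ 0 ∧
        r = (Finset.univ.sup' ⟨⟨0, hp⟩, Finset.mem_univ _⟩ fun j =>
            |(n : ℝ)⁻¹ * ∑ i, z i j * (∑ k, z i k * δ k)|) / I δ} *
        I (βhat - β) ≤ 2 * lam / Real.sqrt n := by
  have hmodel : y = z *ᵥ β + ε := funext hy
  change Real.sqrt n * maxCorr hp z ε ≤ lam at hevent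
  change Real.sqrt n * maxCorr hp z (y - z *ᵥ βhat) ≤ lam at hfeas
  show l1Norm (β + (βhat - β)) ≤ l1Norm β ∧
    Real.sqrt n * maxCorr hp z (z *ᵥ (βhat - β)) ≤ 2 * lam ∧
    sInf {r : ℝ | ∃ δ, l1Norm (β + δ) ≤ l1Norm β ∧ I δ ≠ 0 ∧
      r = maxCorr hp z (z *ᵥ δ) / I δ} * I (βhat - β) ≤ 2 * lam / Real.sqrt n
  have hR : l1Norm (β + (βhat - β)) ≤ l1Norm β := by
    rw [add_sub_cancel]
    exact hmin β ((dantzigScore_eq_of_model hp z hmodel).trans_le hevent)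
  have hcorr : Real.sqrt n * maxCorr hp z (z *ᵥ (βhat - β)) ≤ 2 * lam := by
    calc _ ≤ Real.sqrt n * (maxCorr hp z ε + maxCorr hp z (y - z *ᵥ βhat)) :=
          mul_le_mul_of_nonneg_left (maxCorr_mulVec_error_le hp z hmodel βhat)
            (Real.sqrt_nonneg _)
      _ ≤ 2 * lam := by linarith
  refine ⟨hR, hcorr, ?_⟩
  calc _ ≤ maxCorr hp z (z *ᵥ (βhat - β)) :=
        sInf_div_seminorm_mul_le I {δ | l1Norm (β + δ) ≤ l1Norm β} _
          (fun δ => maxCorr_nonneg hp z _) hR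
    _ ≤ 2 * lam / Real.sqrt n := by
        rw [le_div_iff₀ (Real.sqrt_pos.mpr (Nat.cast_pos.mpr hn)), mul_comm]
        exact hcorr

/-- Deterministic Dantzig-selector error bound: in the linear model
`y_i = z_i'β + ε_i`, if `β̂` minimizes `‖b‖₁` subject to the Dantzig constraint
with penalty `λ`, then on the event `√n max_j |E_n[z_{ij}ε_i]| ≤ λ`, the error
`δ̂ = β̂ − β` satisfies `δ̂ ∈ R(β)`, `√n max_j |E_n[z_{ij}(z_i'δ̂)]| ≤ 2λ` and
`κ_I(β) ‖δ̂‖_I ≤ 2λ/√n` for any seminorm `‖·‖_I`, where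
`κ_I(β) = inf { max_j |E_n[z_{ij}(z_i'δ)]| / ‖δ‖_I : δ ∈ R(β), ‖δ‖_I ≠ 0 }`. -/
theorem dantzig_selector_deterministic_bound (n p : ℕ) (hn : 0 < n) (hp : 0 < p)
    (z : Fin n → Fin p → ℝ) (β : Fin p → ℝ) (ε : Fin n → ℝ)
    (y : Fin n → ℝ) (hy : ∀ i, y i = (∑ j, z i j * β j) + ε i)
    (lam : ℝ) (hlam : 0 < lam)
    (βhat : Fin p → ℝ)
    (hfeas : dantzigScore n p hp z y βhat ≤ lam)
    (hmin : ∀ b : Fin p → ℝ, dantzigScore n p hp z y b ≤ lam →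
      l1Norm βhat ≤ l1Norm b)
    (hevent : Real.sqrt n * (Finset.univ.sup' ⟨⟨0, hp⟩, Finset.mem_univ _⟩ fun j =>
      |(n : ℝ)⁻¹ * ∑ i, z i j * ε i|) ≤ lam)
    (I : Seminorm ℝ (Fin p → ℝ)) :
    l1Norm (β + (βhat - β)) ≤ l1Norm β ∧
    Real.sqrt n * (Finset.univ.sup' ⟨⟨0, hp⟩, Finset.mem_univ _⟩ fun j =>
        |(n : ℝ)⁻¹ * ∑ i, z i j * (∑ k, z i k * (βhat k - β k))|) ≤ 2 * lam ∧
    sInf {r : ℝ | ∃ δ : Fin p → ℝ, l1Norm (β + δ) ≤ l1Norm β ∧ I δ ≠ 0 ∧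
        r = (Finset.univ.sup' ⟨⟨0, hp⟩, Finset.mem_univ _⟩ fun j =>
            |(n : ℝ)⁻¹ * ∑ i, z i j * (∑ k, z i k * δ k)|) / I δ} *
        I (βhat - β) ≤ 2 * lam / Real.sqrt n :=
  dantzig_selector_deterministic_bound_general n p hn hp z β ε y hy lam βhat hfeas hmin hevent I
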